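/- arXiv:0709.2559 — 3 statements merged into one kernel-verified Lean document; each statement's English description precedes it below -/
import Mathlib

section
/- The six-hump camel back function g(x1,x2) = 4x1^2 + x1*x2 - 4x2^2 - 2.1x1^4 + 4x2^4 + x1^6/3 attains its global minimum over R^2 at exactly two points, which are of the form (a,-b) and (-a,b) with a ≈ 0.0898, b ≈ 0.7127; in particular, if (x1,x2) is a global minimizer then so is (-x1,-x2). -/
/-! `sixHump` is even and coercive, so it attains its minimum, and every minimizer lies in the
sublevel set `{sixHump ≤ -1.0316}`, which contains `(0.0898, -0.7127)`. That sublevel set is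
covered by the box `B = [0.03, 0.274] × [-0.91, -0.549]` and its reflection `-B`. On `B` the
function lies above each of its tangent planes by at least `2‖q - p‖²`. Applied at the midpoint of
two minimizers in `B`, this forces them to coincide; applied at `(0.0898, -0.7127)`, where the
gradient is below `10⁻³`, it puts the minimizer within `10⁻³` of that point. -/

/-- The six-hump camel back function. -/
noncomputable def sixHump (x1 x2 : ℝ) : ℝ :=
  4*x1^2 + x1*x2 - 4*x2^2 - 2.1*x1^4 + 4*x2^4 + x1^6/3

open Filter Set

theorem abs_le_of_mul_add_mul_add_two_mul_sq_nonpos {g₁ g₂ d₁ d₂ ε : ℝ} (hg₁ : |g₁| ≤ ε)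
    (hg₂ : |g₂| ≤ ε) (h : g₁ * d₁ + g₂ * d₂ + 2 * (d₁^2 + d₂^2) ≤ 0) : |d₁| ≤ ε ∧ |d₂| ≤ ε := by
  have hlin (g d : ℝ) (hg : |g| ≤ ε) : -(ε * |d|) ≤ g * d := by
    have := neg_abs_le (g * d)
    rw [abs_mul] at this
    nlinarith [abs_nonneg d]
  have hsq : 2 * (|d₁|^2 + |d₂|^2) ≤ ε * (|d₁| + |d₂|) := by
    rw [sq_abs, sq_abs]; linarith [hlin g₁ d₁ hg₁, hlin g₂ d₂ hg₂]
  have hε : 0 ≤ ε := (abs_nonneg g₁).trans hg₁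
  constructor <;> by_contra! hd <;>
    nlinarith [sq_nonneg (|d₁| - ε/4), sq_nonneg (|d₂| - ε/4), abs_nonneg d₁, abs_nonneg d₂]

theorem Continuous.exists_forall_le_of_norm_sub_le {E : Type*} [NormedAddCommGroup E]
    [ProperSpace E] [Nonempty E] {f : E → ℝ} (hf : Continuous f) (c : ℝ)
    (hc : ∀ x, ‖x‖ - c ≤ f x) : ∃ x, ∀ y, f x ≤ f y := by
  refine hf.exists_forall_le (tendsto_atTop_mono hc ?_)
  simpa only [sub_eq_add_neg] using
    tendsto_atTop_add_const_right _ (-c) tendsto_norm_cocompact_atTop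

theorem sixHump_neg_neg (x y : ℝ) : sixHump (-x) (-y) = sixHump x y := by
  unfold sixHump; ring

theorem sq_add_sq_sub_five_le_sixHump (x y : ℝ) : x^2 + y^2 - 5 ≤ sixHump x y := by
  unfold sixHump
  nlinarith [sq_nonneg (x+y), sq_nonneg (2*y^2 - 11/8), sq_nonneg (x*(x^2 - 3.5)), sq_nonneg x,
    sq_nonneg (x^2 - 3.5)]

def IsSixHumpMinimizer (p : ℝ × ℝ) : Prop :=
  ∀ q : ℝ × ℝ, sixHump p.1 p.2 ≤ sixHump q.1 q.2

theorem exists_isSixHumpMinimizer : ∃ p, IsSixHumpMinimizer p := by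
  refine Continuous.exists_forall_le_of_norm_sub_le (f := fun p : ℝ × ℝ => sixHump p.1 p.2)
    (by unfold sixHump; fun_prop) 6 fun p => ?_
  have hnorm : ‖p‖ ≤ |p.1| + |p.2| := by
    rw [Prod.norm_def, Real.norm_eq_abs, Real.norm_eq_abs]
    exact max_le (by linarith [abs_nonneg p.2]) (by linarith [abs_nonneg p.1])
  have h1 : |p.1| ≤ p.1^2 + 1/4 := by nlinarith [sq_abs p.1, sq_nonneg (|p.1| - 1/2)]
  have h2 : |p.2| ≤ p.2^2 + 1/4 := by nlinarith [sq_abs p.2, sq_nonneg (|p.2| - 1/2)]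
  linarith [sq_add_sq_sub_five_le_sixHump p.1 p.2]

theorem IsSixHumpMinimizer.neg {p : ℝ × ℝ} (hp : IsSixHumpMinimizer p) :
    IsSixHumpMinimizer (-p) := by
  intro q
  simpa only [Prod.fst_neg, Prod.snd_neg, sixHump_neg_neg] using hp q

def sixHumpBox : Set (ℝ × ℝ) := Icc 0.03 0.274 ×ˢ Icc (-0.91) (-0.549)

theorem mem_sixHumpBox_or_neg_mem_of_sixHump_le {p : ℝ × ℝ}
    (h : sixHump p.1 p.2 ≤ -1.0316) : p ∈ sixHumpBox ∨ -p ∈ sixHumpBox := by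
  obtain ⟨x, y⟩ := p
  simp only [sixHumpBox, mem_prod, mem_Icc, Prod.fst_neg, Prod.snd_neg] at h ⊢
  unfold sixHump at h
  have hx : x^2 ≤ 0.075 := by
    by_contra! hc
    nlinarith [sq_nonneg (x+y), sq_nonneg (2*y^2 - 9/8), sq_nonneg (x^2 - 3.1125),
      mul_nonneg (by linarith : (0:ℝ) ≤ x^2 - 0.075) (sq_nonneg (x^2 - 3.1125)), sq_nonneg x]
  have hy1 : 0.3019 ≤ y^2 := by nlinarith [sq_nonneg (x+y), sq_nonneg x, sq_nonneg (x^2 - 1)]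
  have hy2 : y^2 ≤ 0.8231 := by nlinarith [sq_nonneg (x+y), sq_nonneg x, sq_nonneg (x^2 - 1)]
  have hxy : x*y ≤ -0.0316 := by
    nlinarith [sq_nonneg (2*y^2-1), sq_nonneg x, sq_nonneg (x^2-1), sq_nonneg (x*(x^2-1))]
  rcases lt_or_gt_of_ne (show y ≠ 0 by rintro rfl; norm_num at hxy) with hy | hy
  · left
    refine ⟨⟨?_, ?_⟩, ?_, ?_⟩ <;> nlinarith
  · right
    refine ⟨⟨?_, ?_⟩, ?_, ?_⟩ <;> nlinarith

def sixHumpGradient (x y : ℝ) : ℝ × ℝ :=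
  (8*x - 8.4*x^3 + 2*x^5 + y, x - 8*y + 16*y^3)

theorem sixHump_tangent_add_two_mul_sq_le {x₀ y₀ x y : ℝ} (h₀ : (x₀, y₀) ∈ sixHumpBox)
    (h : (x, y) ∈ sixHumpBox) :
    sixHump x₀ y₀ + (sixHumpGradient x₀ y₀).1 * (x - x₀)
        + (sixHumpGradient x₀ y₀).2 * (y - y₀) + 2 * ((x - x₀)^2 + (y - y₀)^2)
      ≤ sixHump x y := by
  simp only [sixHumpBox, mem_prod, mem_Icc] at h₀ h
  obtain ⟨⟨hx₀l, hx₀u⟩, hy₀l, hy₀u⟩ := h₀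
  obtain ⟨⟨hxl, hxu⟩, hyl, hyu⟩ := h
  -- exact Taylor expansion; the curvature factors are at least 3 on the box and the cross term
  -- `xy` costs at most `½‖q - p‖²`
  have hexpand : sixHump x y = sixHump x₀ y₀ + (sixHumpGradient x₀ y₀).1 * (x - x₀)
      + (sixHumpGradient x₀ y₀).2 * (y - y₀)
      + (x - x₀)^2 * (4 - 2.1*(x^2 + 2*x*x₀ + 3*x₀^2)
          + (x^4 + 2*x^3*x₀ + 3*x^2*x₀^2 + 4*x*x₀^3 + 5*x₀^4)/3)
      + (y - y₀)^2 * (4*(y^2 + 2*y*y₀ + 3*y₀^2) - 4) + (x - x₀) * (y - y₀) := by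
    simp only [sixHump, sixHumpGradient]; ring
  have hcurv_x : 3 ≤ 4 - 2.1*(x^2 + 2*x*x₀ + 3*x₀^2)
      + (x^4 + 2*x^3*x₀ + 3*x^2*x₀^2 + 4*x*x₀^3 + 5*x₀^4)/3 := by
    have : 0 ≤ x^4 + 2*x^3*x₀ + 3*x^2*x₀^2 + 4*x*x₀^3 + 5*x₀^4 := by positivity
    nlinarith [mul_le_mul hxu hx₀u (by linarith) (by norm_num)]
  have hcurv_y : 3 ≤ 4*(y^2 + 2*y*y₀ + 3*y₀^2) - 4 := by
    nlinarith [mul_le_mul_of_nonpos_left hyu (by linarith : y₀ ≤ 0)]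
  rw [hexpand]
  nlinarith [mul_le_mul_of_nonneg_left hcurv_x (sq_nonneg (x - x₀)),
    mul_le_mul_of_nonneg_left hcurv_y (sq_nonneg (y - y₀)), sq_nonneg (x - x₀ + (y - y₀))]

theorem IsSixHumpMinimizer.eq_of_mem_sixHumpBox {p q : ℝ × ℝ} (hp : IsSixHumpMinimizer p)
    (hq : IsSixHumpMinimizer q) (hpB : p ∈ sixHumpBox) (hqB : q ∈ sixHumpBox) : p = q := by
  obtain ⟨x₁, y₁⟩ := p
  obtain ⟨x₂, y₂⟩ := q
  have hmB : ((x₁ + x₂)/2, (y₁ + y₂)/2) ∈ sixHumpBox := by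
    simp only [sixHumpBox, mem_prod, mem_Icc] at hpB hqB ⊢
    refine ⟨⟨?_, ?_⟩, ?_, ?_⟩ <;> linarith
  have h₁ := sixHump_tangent_add_two_mul_sq_le hmB hpB
  have h₂ := sixHump_tangent_add_two_mul_sq_le hmB hqB
  have hmid := hp ((x₁ + x₂)/2, (y₁ + y₂)/2)
  have h₁₂ := hp (x₂, y₂)
  have h₂₁ := hq (x₁, y₁)
  dsimp only at hmid h₁₂ h₂₁
  have hsq : (x₁ - x₂)^2 + (y₁ - y₂)^2 ≤ 0 := by nlinarith
  have hx : x₁ = x₂ := by nlinarith [sq_nonneg (x₁ - x₂), sq_nonneg (y₁ - y₂)]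
  have hy : y₁ = y₂ := by nlinarith [sq_nonneg (x₁ - x₂), sq_nonneg (y₁ - y₂)]
  rw [hx, hy]

theorem IsSixHumpMinimizer.abs_sub_le_of_mem_sixHumpBox {p : ℝ × ℝ} (hp : IsSixHumpMinimizer p)
    (hB : p ∈ sixHumpBox) : |p.1 - 0.0898| ≤ 0.001 ∧ |p.2 + 0.7127| ≤ 0.001 := by
  have hcB : ((0.0898 : ℝ), (-0.7127 : ℝ)) ∈ sixHumpBox := by
    norm_num [sixHumpBox]
  have hgap := (hp (0.0898, -0.7127)).trans' (sixHump_tangent_add_two_mul_sq_le hcB hB)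
  have hgrad : |(sixHumpGradient 0.0898 (-0.7127)).1| ≤ 0.001 ∧
      |(sixHumpGradient 0.0898 (-0.7127)).2| ≤ 0.001 := by
    norm_num [sixHumpGradient, abs_le]
  rw [← sub_neg_eq_add]
  exact abs_le_of_mul_add_mul_add_two_mul_sq_nonpos hgrad.1 hgrad.2 (by linarith)

theorem sixHump_two_global_minimizers :
    ∃ a b : ℝ, |a - 0.0898| ≤ 0.001 ∧ |b - 0.7127| ≤ 0.001 ∧
      {p : ℝ × ℝ | ∀ q : ℝ × ℝ, sixHump p.1 p.2 ≤ sixHump q.1 q.2}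
        = {(a, -b), (-a, b)} ∧
      ∀ p : ℝ × ℝ, (∀ q : ℝ × ℝ, sixHump p.1 p.2 ≤ sixHump q.1 q.2) →
        (∀ q : ℝ × ℝ, sixHump (-p.1) (-p.2) ≤ sixHump q.1 q.2) := by
  have mem_or_neg_mem {p : ℝ × ℝ} (hp : IsSixHumpMinimizer p) :
      p ∈ sixHumpBox ∨ -p ∈ sixHumpBox :=
    mem_sixHumpBox_or_neg_mem_of_sixHump_le <| (hp (0.0898, -0.7127)).trans (by norm_num [sixHump])
  obtain ⟨p₀, hp₀⟩ := exists_isSixHumpMinimizer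
  obtain ⟨p, hp, hpB⟩ : ∃ p, IsSixHumpMinimizer p ∧ p ∈ sixHumpBox := by
    rcases mem_or_neg_mem hp₀ with h | h
    exacts [⟨p₀, hp₀, h⟩, ⟨-p₀, hp₀.neg, h⟩]
  have hset : {q | IsSixHumpMinimizer q} = {p, -p} := by
    ext q
    refine ⟨fun hq => ?_, ?_⟩
    · rcases mem_or_neg_mem hq with h | h
      exacts [Or.inl (hq.eq_of_mem_sixHumpBox hp h hpB),
        Or.inr (neg_eq_iff_eq_neg.mp (hq.neg.eq_of_mem_sixHumpBox hp h hpB))]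
    · rintro (rfl | rfl)
      exacts [hp, hp.neg]
  obtain ⟨ha, hb⟩ := hp.abs_sub_le_of_mem_sixHumpBox hpB
  refine ⟨p.1, -p.2, ha, ?_, ?_, fun q hq => IsSixHumpMinimizer.neg hq⟩
  · rwa [← abs_neg, neg_sub, sub_neg_eq_add, add_comm]
  · rw [neg_neg]
    exact hset
end

section
/- Let g0, h0 be polynomials with h0(x) > 0 for all x in a compact set K ⊆ R^n, and K nonempty. Then min_{x∈K} g0(x)/h0(x) equals the infimum of ∫_K g0 dμ over all finite Borel measures μ supported on K satisfying ∫_K h0 dμ = 1. -/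
/-! With `m = g0 x₀ / h0 x₀` the minimum of `g0 / h0` on `K`, the mass `δ_{x₀} / h0 x₀` is admissible
and has `∫ g0 = m`, while for every admissible `μ` integrating `m * h0 ≤ g0` over `K` gives
`m = ∫ m * h0 dμ ≤ ∫ g0 dμ`. -/

open MeasureTheory Set

variable {X : Type*} [MeasurableSpace X]

lemma le_integral_of_mul_le_of_measure_compl_eq_zero {K : Set X} {μ : Measure X} {g h : X → ℝ}
    {m : ℝ} (hμK : μ Kᶜ = 0) (hg : Integrable g μ) (hh : Integrable h μ)
    (hh_one : ∫ x, h x ∂μ = 1) (hle : ∀ x ∈ K, m * h x ≤ g x) :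
    m ≤ ∫ x, g x ∂μ := by
  have hae : ∀ᵐ x ∂μ, m * h x ≤ g x := measure_mono_null (fun x hx h' => hx (hle x h')) hμK
  calc m = ∫ x, m * h x ∂μ := by rw [integral_const_mul, hh_one, mul_one]
    _ ≤ ∫ x, g x ∂μ := integral_mono_ae (hh.const_mul m) hg hae

lemma exists_measure_integral_eq_div [MeasurableSingletonClass X] {K : Set X} {g h : X → ℝ}
    {x₀ : X} (hx₀ : x₀ ∈ K) (hpos : 0 < h x₀) :
    ∃ μ : Measure X, IsFiniteMeasure μ ∧ μ Kᶜ = 0 ∧ ∫ x, h x ∂μ = 1 ∧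
      g x₀ / h x₀ = ∫ x, g x ∂μ := by
  refine ⟨(h x₀)⁻¹.toNNReal • Measure.dirac x₀, inferInstance, ?_, ?_, ?_⟩
  · simp [hx₀]
  · rw [integral_smul_nnreal_measure, integral_dirac, NNReal.smul_def,
      Real.coe_toNNReal _ (inv_nonneg.2 hpos.le), smul_eq_mul, inv_mul_cancel₀ hpos.ne']
  · rw [integral_smul_nnreal_measure, integral_dirac, NNReal.smul_def,
      Real.coe_toNNReal _ (inv_nonneg.2 hpos.le), smul_eq_mul, div_eq_inv_mul]

variable [TopologicalSpace X] [OpensMeasurableSpace X] [T2Space X]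

lemma IsCompact.integrable_of_measure_compl_eq_zero {K : Set X} (hK : IsCompact K) {f : X → ℝ}
    (hf : ContinuousOn f K) {μ : Measure X} [IsFiniteMeasure μ] (hμK : μ Kᶜ = 0) :
    Integrable f μ := by
  rw [← Measure.restrict_eq_self_of_ae_mem hμK]
  exact hf.integrableOn_compact hK

theorem rational_min_eq_inf_over_measures
    (n : ℕ) (K : Set (Fin n → ℝ)) (hK : IsCompact K) (hKne : K.Nonempty)
    (g0 h0 : (Fin n → ℝ) → ℝ) (hg0 : Continuous g0) (hh0 : Continuous h0)
    (hpos : ∀ x ∈ K, 0 < h0 x) :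
    sInf ((fun x => g0 x / h0 x) '' K) =
      sInf {r : ℝ | ∃ μ : Measure (Fin n → ℝ), IsFiniteMeasure μ ∧
        μ Kᶜ = 0 ∧ (∫ x, h0 x ∂μ) = 1 ∧ r = ∫ x, g0 x ∂μ} := by
  have hcont : ContinuousOn (fun x => g0 x / h0 x) K :=
    hg0.continuousOn.div hh0.continuousOn fun x hx => (hpos x hx).ne'
  obtain ⟨x₀, hx₀, hmin⟩ := hK.exists_isMinOn hKne hcont
  rw [IsLeast.csInf_eq ⟨mem_image_of_mem _ hx₀, (hmin.isGLB hx₀).1⟩]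
  refine (IsLeast.csInf_eq ⟨?_, ?_⟩).symm
  · exact exists_measure_integral_eq_div hx₀ (hpos x₀ hx₀)
  · rintro r ⟨μ, hμ, hμK, hμh, rfl⟩
    exact le_integral_of_mul_le_of_measure_compl_eq_zero hμK
      (hK.integrable_of_measure_compl_eq_zero hg0.continuousOn hμK)
      (hK.integrable_of_measure_compl_eq_zero hh0.continuousOn hμK) hμh
      fun x hx => (le_div_iff₀ (hpos x hx)).1 (hmin hx)
end

section
/- For the double integrator x1' = x2, x2' = u with |u| ≤ 1 and state constraint x2 ≥ -1, starting from (1,1), the minimum time to reach the origin equals 3.5, i.e., 1 + x1(0) + x2(0) + x2(0)^2/2 evaluated at (1,1). -/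
/-!
Along an admissible trajectory `|x₂'| ≤ 1`, so `x₂ t ≥ max (b - t) (t - T)`, and the state
constraint adds `x₂ ≥ -1`. Integrating these lower bounds for `x₂ = x₁'` against
`x₁ T - x₁ 0 = -a` gives `T ≥ 1 + a + b + b²/2`. This is the time of the bang-bang control
`-1, 0, +1` switching at `s = b + 1` and `T - 1`, whose velocity is
`-1 + (s - t)⁺ + (t - (T - 1))⁺`. A control with jumps is not a derivative, so it is not
admissible here; rounding the two corners of the velocity into `C¹` ramps of width `2h` gives
admissible trajectories that need only the extra time `h²/3`.
-/

/-- Admissible trajectory of the double integrator with state constraint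
`x2 ≥ -1`, steering `(a,b)` to the origin in time `T`. -/
def DIreachesC (a b T : ℝ) : Prop :=
  ∃ x1 x2 u : ℝ → ℝ, Measurable u ∧ (∀ t, u t ∈ Set.Icc (-1 : ℝ) 1) ∧
    (∀ t ∈ Set.Icc (0 : ℝ) T, HasDerivAt x1 (x2 t) t ∧ HasDerivAt x2 (u t) t) ∧
    (∀ t ∈ Set.Icc (0 : ℝ) T, -1 ≤ x2 t) ∧
    x1 0 = a ∧ x2 0 = b ∧ x1 T = 0 ∧ x2 T = 0

open Set

theorem HasDerivAt.ite_lt {f g f' g' : ℝ → ℝ} {c : ℝ} (hf : ∀ t ≤ c, HasDerivAt f (f' t) t)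
    (hg : ∀ t ≥ c, HasDerivAt g (g' t) t) (hfg : f c = g c) (hfg' : f' c = g' c) (t : ℝ) :
    HasDerivAt (fun s => if s < c then f s else g s) (if t < c then f' t else g' t) t := by
  rcases lt_trichotomy t c with ht | rfl | ht
  · rw [if_pos ht]
    exact (hf t ht.le).congr_of_eventuallyEq <|
      (eventually_lt_nhds ht).mono fun s hs => if_pos hs
  · rw [if_neg (lt_irrefl t), ← hfg']
    have hleft : HasDerivWithinAt (fun s => if s < t then f s else g s) (f' t) (Iic t) t :=
      (hf t le_rfl).hasDerivWithinAt.congr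
        (fun s hs => by rcases (mem_Iic.1 hs).lt_or_eq with hs | rfl <;> simp [*]) (by simp [hfg])
    have hright : HasDerivWithinAt (fun s => if s < t then f s else g s) (f' t) (Ici t) t :=
      (hfg' ▸ (hg t le_rfl).hasDerivWithinAt).congr
        (fun s hs => if_neg (not_lt.2 hs)) (if_neg (lt_irrefl t))
    simpa [Iic_union_Ici] using hleft.union hright
  · rw [if_neg ht.not_gt]
    exact (hg t ht.le).congr_of_eventuallyEq <|
      (eventually_gt_nhds ht).mono fun s hs => if_neg hs.not_gt

theorem sub_le_sub_of_hasDerivAt_le {f g f' g' : ℝ → ℝ} {p q : ℝ} (hpq : p ≤ q)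
    (hf : ∀ t ∈ Icc p q, HasDerivAt f (f' t) t) (hg : ∀ t ∈ Icc p q, HasDerivAt g (g' t) t)
    (hle : ∀ t ∈ Icc p q, f' t ≤ g' t) : f q - f p ≤ g q - g p := by
  have hmono : MonotoneOn (fun t => g t - f t) (Icc p q) := by
    refine monotoneOn_of_hasDerivWithinAt_nonneg (f' := g' - f') (convex_Icc p q) ?_ ?_ ?_
    · exact fun t ht => ((hg t ht).sub (hf t ht)).continuousAt.continuousWithinAt
    · intro t ht
      rw [interior_Icc] at ht
      exact ((hg t (Ioo_subset_Icc_self ht)).sub (hf t (Ioo_subset_Icc_self ht))).hasDerivWithinAt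
    · intro t ht
      rw [interior_Icc] at ht
      exact sub_nonneg.2 (hle t (Ioo_subset_Icc_self ht))
  linarith [hmono (left_mem_Icc.2 hpq) (right_mem_Icc.2 hpq) hpq]

theorem hasDerivAt_mul_add_mul_sq_div_two (c d t : ℝ) :
    HasDerivAt (fun s => c * s + d * s ^ 2 / 2) (c + d * t) t :=
  (((hasDerivAt_id' t).const_mul c).add
    (((hasDerivAt_pow 2 t).const_mul d).div_const 2)).congr_deriv (by push_cast; ring)

theorem affine_antideriv_le_sub_of_le_hasDerivAt {f f' : ℝ → ℝ} {c d p q : ℝ} (hpq : p ≤ q)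
    (hf : ∀ t ∈ Icc p q, HasDerivAt f (f' t) t) (hle : ∀ t ∈ Icc p q, c + d * t ≤ f' t) :
    c * (q - p) + d * (q ^ 2 - p ^ 2) / 2 ≤ f q - f p := by
  have := sub_le_sub_of_hasDerivAt_le hpq
    (fun t _ => hasDerivAt_mul_add_mul_sq_div_two c d t) hf hle
  linarith

noncomputable def DIminTime (a b : ℝ) : ℝ := 1 + a + b + b ^ 2 / 2

theorem DIminTime_le_of_DIreachesC {a b T : ℝ} (hab : 2 ≤ 2 * a + b ^ 2) (hT : 0 ≤ T)
    (h : DIreachesC a b T) : DIminTime a b ≤ T := by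
  obtain ⟨x1, x2, u, -, hu, hderiv, hstate, hx10, hx20, hx1T, hx2T⟩ := h
  have hb : -1 ≤ b := hx20 ▸ hstate 0 ⟨le_rfl, hT⟩
  have hx2_left : ∀ t ∈ Icc 0 T, b - t ≤ x2 t := fun t ht => by
    have := affine_antideriv_le_sub_of_le_hasDerivAt (c := -1) (d := 0) ht.1
      (fun s hs => (hderiv s ⟨hs.1, hs.2.trans ht.2⟩).2) (fun s _ => by linarith [(hu s).1])
    linarith
  have hx2_right : ∀ t ∈ Icc 0 T, t - T ≤ x2 t := fun t ht => by
    have := affine_antideriv_le_sub_of_le_hasDerivAt (c := -1) (d := 0) ht.2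
      (fun s hs => (hderiv s ⟨ht.1.trans hs.1, hs.2⟩).2.neg) (fun s _ => by linarith [(hu s).2])
    simp only [Pi.neg_apply] at this
    linarith
  have hx1_incr : ∀ p q c d : ℝ, 0 ≤ p → p ≤ q → q ≤ T → (∀ t ∈ Icc p q, c + d * t ≤ x2 t) →
      c * (q - p) + d * (q ^ 2 - p ^ 2) / 2 ≤ x1 q - x1 p := fun p q c d hp hpq hq hle =>
    affine_antideriv_le_sub_of_le_hasDerivAt hpq
      (fun s hs => (hderiv s ⟨hp.trans hs.1, hs.2.trans hq⟩).1) hle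
  have hbT : b ≤ T := by linarith [hx2_left T ⟨hT, le_rfl⟩]
  have hbT' : -T ≤ b := by linarith [hx2_right 0 ⟨le_rfl, hT⟩]
  -- the unconstrained bound `(T - b)² ≥ 4a + 2b² ≥ 4` orders the three arcs used below
  have hTb : b + 2 ≤ T := by
    have h1 := hx1_incr 0 ((T + b) / 2) b (-1) (by linarith) (by linarith) (by linarith)
      (fun t ht => by linarith [hx2_left t ⟨ht.1, by linarith [ht.2]⟩])
    have h2 := hx1_incr ((T + b) / 2) T (-T) 1 (by linarith) (by linarith) le_rfl
      (fun t ht => by linarith [hx2_right t ⟨by linarith [ht.1], ht.2⟩])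
    nlinarith
  have h1 := hx1_incr 0 (b + 1) b (-1) le_rfl (by linarith) (by linarith)
    (fun t ht => by linarith [hx2_left t ⟨ht.1, by linarith [ht.2]⟩])
  have h2 := hx1_incr (b + 1) (T - 1) (-1) 0 (by linarith) (by linarith) (by linarith)
    (fun t ht => by linarith [hstate t ⟨by linarith [ht.1], by linarith [ht.2]⟩])
  have h3 := hx1_incr (T - 1) T (-T) 1 (by linarith) (by linarith) le_rfl
    (fun t ht => by linarith [hx2_right t ⟨by linarith [ht.1], ht.2⟩])
  unfold DIminTime
  nlinarith

noncomputable def smoothStep (h τ : ℝ) : ℝ :=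
  if τ < -h then 0 else if τ < h then (τ + h) / (2 * h) else 1

noncomputable def smoothRamp (h τ : ℝ) : ℝ :=
  if τ < -h then 0 else if τ < h then (τ + h) ^ 2 / (4 * h) else τ

noncomputable def smoothRampAntideriv (h τ : ℝ) : ℝ :=
  if τ < -h then 0 else if τ < h then (τ + h) ^ 3 / (12 * h) else τ ^ 2 / 2 + h ^ 2 / 6

section smooth

variable {h : ℝ}

theorem smoothStep_mem_Icc (τ : ℝ) : smoothStep h τ ∈ Icc 0 1 := by
  unfold smoothStep
  split_ifs with h₁ h₂
  · simp
  · exact ⟨div_nonneg (by linarith [not_lt.1 h₁]) (by linarith),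
      div_le_one_of_le₀ (by linarith) (by linarith)⟩
  · simp

theorem smoothRamp_nonneg (hh : 0 ≤ h) (τ : ℝ) : 0 ≤ smoothRamp h τ := by
  unfold smoothRamp
  split_ifs with h₁ h₂
  · exact le_rfl
  · positivity
  · linarith [not_lt.1 h₂]

theorem smoothRamp_of_le_neg (hh : 0 ≤ h) {τ : ℝ} (hτ : τ ≤ -h) : smoothRamp h τ = 0 := by
  unfold smoothRamp
  split_ifs with h₁ h₂
  · rfl
  · rw [le_antisymm hτ (not_lt.1 h₁)]
    simp
  · linarith [not_lt.1 h₁, not_lt.1 h₂]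

theorem smoothRamp_of_le (hh : 0 ≤ h) {τ : ℝ} (hτ : h ≤ τ) : smoothRamp h τ = τ := by
  unfold smoothRamp
  rw [if_neg (by linarith), if_neg (by linarith)]

theorem smoothRampAntideriv_of_le_neg (hh : 0 ≤ h) {τ : ℝ} (hτ : τ ≤ -h) :
    smoothRampAntideriv h τ = 0 := by
  unfold smoothRampAntideriv
  split_ifs with h₁ h₂
  · rfl
  · rw [le_antisymm hτ (not_lt.1 h₁)]
    simp
  · obtain rfl : h = 0 := by linarith [not_lt.1 h₁, not_lt.1 h₂]
    obtain rfl : τ = 0 := by linarith [not_lt.1 h₁]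
    simp

theorem smoothRampAntideriv_of_le (hh : 0 ≤ h) {τ : ℝ} (hτ : h ≤ τ) :
    smoothRampAntideriv h τ = τ ^ 2 / 2 + h ^ 2 / 6 := by
  unfold smoothRampAntideriv
  rw [if_neg (by linarith), if_neg (by linarith)]

theorem hasDerivAt_smoothRamp (hh : 0 < h) (τ : ℝ) :
    HasDerivAt (smoothRamp h) (smoothStep h τ) τ := by
  have hquad : ∀ t, HasDerivAt (fun τ => (τ + h) ^ 2 / (4 * h)) ((t + h) / (2 * h)) t := fun t =>
    ((((hasDerivAt_id' t).add_const h).pow 2).div_const (4 * h)).congr_deriv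
      (by field_simp; ring)
  have hupper := HasDerivAt.ite_lt (fun t _ => hquad t) (fun t _ => hasDerivAt_id' t)
    (by field_simp; ring) (by field_simp; ring)
  exact HasDerivAt.ite_lt (fun t _ => hasDerivAt_const t 0) (fun t _ => hupper t)
    (by simp only [neg_lt_self hh, if_true]; ring)
    (by simp only [neg_lt_self hh, if_true]; ring) τ

theorem hasDerivAt_smoothRampAntideriv (hh : 0 < h) (τ : ℝ) :
    HasDerivAt (smoothRampAntideriv h) (smoothRamp h τ) τ := by
  have hcubic : ∀ t, HasDerivAt (fun τ => (τ + h) ^ 3 / (12 * h)) ((t + h) ^ 2 / (4 * h)) t :=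
    fun t => ((((hasDerivAt_id' t).add_const h).pow 3).div_const (12 * h)).congr_deriv
      (by field_simp; ring)
  have hquad : ∀ t, HasDerivAt (fun τ => τ ^ 2 / 2 + h ^ 2 / 6) t t := fun t =>
    (((hasDerivAt_pow 2 t).div_const 2).add_const _).congr_deriv (by push_cast; ring)
  have hupper := HasDerivAt.ite_lt (fun t _ => hcubic t) (fun t _ => hquad t)
    (by field_simp; ring) (by field_simp; ring)
  exact HasDerivAt.ite_lt (fun t _ => hasDerivAt_const t 0) (fun t _ => hupper t)
    (by simp only [neg_lt_self hh, if_true]; ring)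
    (by simp only [neg_lt_self hh, if_true]; ring) τ

end smooth

noncomputable def approxControl (h s T t : ℝ) : ℝ :=
  smoothStep h (t - (T - 1)) - smoothStep h (s - t)

noncomputable def approxVelocity (h s T t : ℝ) : ℝ :=
  -1 + smoothRamp h (s - t) + smoothRamp h (t - (T - 1))

noncomputable def approxPosition (h s T t : ℝ) : ℝ :=
  T - t - smoothRampAntideriv h (s - t) + smoothRampAntideriv h (t - (T - 1))
    - (1 / 2 + h ^ 2 / 6)

section approx

variable {h : ℝ} (s T : ℝ)

theorem hasDerivAt_approxVelocity (hh : 0 < h) (t : ℝ) :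
    HasDerivAt (approxVelocity h s T) (approxControl h s T t) t := by
  have hdown := (hasDerivAt_smoothRamp hh (s - t)).comp t ((hasDerivAt_id' t).const_sub s)
  have hup := (hasDerivAt_smoothRamp hh (t - (T - 1))).comp t
    ((hasDerivAt_id' t).sub_const (T - 1))
  exact (((hasDerivAt_const t (-1 : ℝ)).add hdown).add hup).congr_deriv
    (by simp only [approxControl]; ring)

theorem hasDerivAt_approxPosition (hh : 0 < h) (t : ℝ) :
    HasDerivAt (approxPosition h s T) (approxVelocity h s T t) t := by
  have hdown := (hasDerivAt_smoothRampAntideriv hh (s - t)).comp t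
    ((hasDerivAt_id' t).const_sub s)
  have hup := (hasDerivAt_smoothRampAntideriv hh (t - (T - 1))).comp t
    ((hasDerivAt_id' t).sub_const (T - 1))
  exact (((((hasDerivAt_id' t).const_sub T).sub hdown).add hup).sub_const _).congr_deriv
    (by simp only [approxVelocity]; ring)

end approx

theorem DIreachesC_DIminTime_add_sq_div_three {a b h : ℝ} (hab : 2 ≤ 2 * a + b ^ 2) (hh : 0 < h)
    (hh1 : h ≤ 1) (hhb : h ≤ b + 1) : DIreachesC a b (DIminTime a b + h ^ 2 / 3) := by
  set T := DIminTime a b + h ^ 2 / 3 with hT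
  have hsT : b + 1 + h ≤ T := by simp only [hT, DIminTime]; nlinarith
  have hT1 : h ≤ T - 1 := by simp only [hT, DIminTime]; nlinarith
  refine ⟨approxPosition h (b + 1) T, approxVelocity h (b + 1) T, approxControl h (b + 1) T,
    ?_, fun t => ?_, fun t _ => ⟨hasDerivAt_approxPosition _ _ hh t,
      hasDerivAt_approxVelocity _ _ hh t⟩, fun t _ => ?_, ?_, ?_, ?_, ?_⟩
  · have : deriv (approxVelocity h (b + 1) T) = approxControl h (b + 1) T :=
      funext fun t => (hasDerivAt_approxVelocity (b + 1) T hh t).deriv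
    exact this ▸ measurable_deriv _
  · obtain ⟨hup₀, hup₁⟩ := smoothStep_mem_Icc (h := h) (t - (T - 1))
    obtain ⟨hdown₀, hdown₁⟩ := smoothStep_mem_Icc (h := h) (b + 1 - t)
    simp only [approxControl, mem_Icc]
    constructor <;> linarith
  · have := smoothRamp_nonneg hh.le (b + 1 - t)
    have := smoothRamp_nonneg hh.le (t - (T - 1))
    simp only [approxVelocity]
    linarith
  · simp only [approxPosition, smoothRampAntideriv_of_le hh.le (by linarith : h ≤ b + 1 - 0),
      smoothRampAntideriv_of_le_neg hh.le (by linarith : 0 - (T - 1) ≤ -h)]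
    simp only [hT, DIminTime]
    ring
  · simp only [approxVelocity, smoothRamp_of_le hh.le (by linarith : h ≤ b + 1 - 0),
      smoothRamp_of_le_neg hh.le (by linarith : 0 - (T - 1) ≤ -h)]
    ring
  · simp only [approxPosition, smoothRampAntideriv_of_le_neg hh.le (by linarith : b + 1 - T ≤ -h),
      smoothRampAntideriv_of_le hh.le (by linarith : h ≤ T - (T - 1))]
    ring
  · simp only [approxVelocity, smoothRamp_of_le_neg hh.le (by linarith : b + 1 - T ≤ -h),
      smoothRamp_of_le hh.le (by linarith : h ≤ T - (T - 1))]
    ring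

theorem sInf_DIreachesC {a b : ℝ} (hb : -1 < b) (hab : 2 ≤ 2 * a + b ^ 2) :
    sInf {T : ℝ | 0 ≤ T ∧ DIreachesC a b T} = DIminTime a b := by
  have hlower : DIminTime a b ∈ lowerBounds {T : ℝ | 0 ≤ T ∧ DIreachesC a b T} :=
    fun T hT => DIminTime_le_of_DIreachesC hab hT.1 hT.2
  have hmem : ∀ h, 0 < h → h ≤ 1 → h ≤ b + 1 →
      DIminTime a b + h ^ 2 / 3 ∈ {T : ℝ | 0 ≤ T ∧ DIreachesC a b T} := fun h hh hh1 hhb =>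
    ⟨by unfold DIminTime; nlinarith, DIreachesC_DIminTime_add_sq_div_three hab hh hh1 hhb⟩
  have hpos : 0 < min 1 (b + 1) := lt_min one_pos (by linarith)
  refine le_antisymm (le_of_forall_pos_le_add fun ε hε => ?_)
    (le_csInf ⟨_, hmem _ hpos (min_le_left _ _) (min_le_right _ _)⟩ hlower)
  set h := min (min 1 (b + 1)) ε
  have hh : 0 < h := lt_min hpos hε
  have hh1 : h ≤ 1 := (min_le_left _ _).trans (min_le_left _ _)
  have hhε : h ≤ ε := min_le_right _ _
  calc sInf {T : ℝ | 0 ≤ T ∧ DIreachesC a b T} ≤ DIminTime a b + h ^ 2 / 3 :=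
        csInf_le ⟨_, hlower⟩ (hmem h hh hh1 ((min_le_left _ _).trans (min_le_right _ _)))
    _ ≤ DIminTime a b + ε := by nlinarith

theorem double_integrator_constrained_minimum_time :
    sInf {T : ℝ | 0 ≤ T ∧ DIreachesC 1 1 T} = 3.5 ∧
    (3.5 : ℝ) = 1 + 1 + 1 + 1^2/2 := by
  rw [sInf_DIreachesC (by norm_num) (by norm_num), DIminTime]
  norm_num
end
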